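/- Let (X, Σ, μ) be a probability measure space, let the (m+1)×(m+1) symmetric matrix M := [[a, bᵀ], [b, D]] be positive definite, and let κ, c : X → ℝ and u : X → ℝ^m be measurable with σ²_A(x) := κ(x) − u(x)ᵀ D⁻¹ u(x) and σ²_{A∪i}(x) := κ(x) − (c(x), u(x))ᵀ M⁻¹ (c(x), u(x)) both μ-integrable. Then ∫ σ²_{A∪i} dμ ≤ ∫ σ²_A dμ, i.e., the Integrated Variance does not increase when a data point is added to the training set. -/

import Mathlib

/-!
Adding a datum can only shrink the posterior variance pointwise, so its integral shrinks too.
Pointwise this is the variational formula `wᵀ M⁻¹ w = max_z (2 zᵀ w - zᵀ M z)` for positive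
definite `M`: evaluating it at `z = (0, D⁻¹ u)` recovers `uᵀ D⁻¹ u`, the same quantity for the
trailing block `D` of `M`.
-/

open Matrix MeasureTheory

namespace Matrix.PosDef

theorem of_fromBlocks₂₂ {n p : Type*} {A : Matrix n n ℝ} {B : Matrix n p ℝ}
    {C : Matrix p n ℝ} {D : Matrix p p ℝ} (hM : (fromBlocks A B C D).PosDef) : D.PosDef :=
  hM.submatrix Sum.inr_injective

variable {n p : Type*} [Fintype n] [Fintype p] [DecidableEq n] [DecidableEq p]

theorem two_mul_dotProduct_sub_le_dotProduct_inv_mulVec {M : Matrix n n ℝ} (hM : M.PosDef)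
    (w z : n → ℝ) : 2 * (z ⬝ᵥ w) - z ⬝ᵥ (M *ᵥ z) ≤ w ⬝ᵥ (M⁻¹ *ᵥ w) := by
  have hMw : M *ᵥ (M⁻¹ *ᵥ w) = w := by
    rw [mulVec_mulVec, mul_nonsing_inv M hM.det_pos.ne'.isUnit, one_mulVec]
  have hcross : (M⁻¹ *ᵥ w) ⬝ᵥ (M *ᵥ z) = w ⬝ᵥ z := by
    rw [dotProduct_mulVec, ← mulVec_transpose, (isHermitian_iff_isSymm.mp hM.isHermitian).eq, hMw]
  have hsq : 0 ≤ (z - M⁻¹ *ᵥ w) ⬝ᵥ (M *ᵥ (z - M⁻¹ *ᵥ w)) := by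
    simpa using (posSemidef_iff_dotProduct_mulVec.mp hM.posSemidef).2 (z - M⁻¹ *ᵥ w)
  rw [mulVec_sub, dotProduct_sub, sub_dotProduct, sub_dotProduct, hMw, hcross,
    dotProduct_comm (M⁻¹ *ᵥ w) w] at hsq
  linarith [dotProduct_comm z w]

theorem dotProduct_inv_mulVec_le_fromBlocks {A : Matrix n n ℝ} {B : Matrix n p ℝ}
    {C : Matrix p n ℝ} {D : Matrix p p ℝ} (hM : (fromBlocks A B C D).PosDef)
    (w₁ : n → ℝ) (w₂ : p → ℝ) :
    w₂ ⬝ᵥ (D⁻¹ *ᵥ w₂) ≤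
      Sum.elim w₁ w₂ ⬝ᵥ ((fromBlocks A B C D)⁻¹ *ᵥ Sum.elim w₁ w₂) := by
  have hDD : D *ᵥ (D⁻¹ *ᵥ w₂) = w₂ := by
    rw [mulVec_mulVec, mul_nonsing_inv D (of_fromBlocks₂₂ hM).det_pos.ne'.isUnit, one_mulVec]
  have h := hM.two_mul_dotProduct_sub_le_dotProduct_inv_mulVec (Sum.elim w₁ w₂)
    (Sum.elim 0 (D⁻¹ *ᵥ w₂))
  simp only [fromBlocks_mulVec, sumElim_dotProduct_sumElim, Sum.elim_comp_inl, Sum.elim_comp_inr,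
    mulVec_zero, zero_add, zero_dotProduct, hDD] at h
  rw [dotProduct_comm (D⁻¹ *ᵥ w₂) w₂] at h
  linarith

end Matrix.PosDef

theorem integrated_variance_antitone_general
    {X : Type*} [MeasurableSpace X] (μ : Measure X)
    {m : ℕ} (D : Matrix (Fin m) (Fin m) ℝ)
    (b : Fin m → ℝ) (a : ℝ)
    (hM : (Matrix.fromBlocks
        (Matrix.of (fun (_ : Fin 1) (_ : Fin 1) => a))
        (Matrix.of (fun (_ : Fin 1) (j : Fin m) => b j))
        (Matrix.of (fun (i : Fin m) (_ : Fin 1) => b i)) D).PosDef)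
    (κ c : X → ℝ) (u : X → Fin m → ℝ)
    (hIntA : Integrable (fun x => κ x - u x ⬝ᵥ (D⁻¹ *ᵥ u x)) μ)
    (hIntAi : Integrable (fun x => κ x - (Sum.elim (fun _ : Fin 1 => c x) (u x)) ⬝ᵥ
        ((Matrix.fromBlocks
            (Matrix.of (fun (_ : Fin 1) (_ : Fin 1) => a))
            (Matrix.of (fun (_ : Fin 1) (j : Fin m) => b j))
            (Matrix.of (fun (i : Fin m) (_ : Fin 1) => b i)) D)⁻¹ *ᵥ
          Sum.elim (fun _ : Fin 1 => c x) (u x))) μ) :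
    ∫ x, (κ x - (Sum.elim (fun _ : Fin 1 => c x) (u x)) ⬝ᵥ
        ((Matrix.fromBlocks
            (Matrix.of (fun (_ : Fin 1) (_ : Fin 1) => a))
            (Matrix.of (fun (_ : Fin 1) (j : Fin m) => b j))
            (Matrix.of (fun (i : Fin m) (_ : Fin 1) => b i)) D)⁻¹ *ᵥ
          Sum.elim (fun _ : Fin 1 => c x) (u x))) ∂μ ≤
      ∫ x, (κ x - u x ⬝ᵥ (D⁻¹ *ᵥ u x)) ∂μ :=
  integral_mono hIntAi hIntA fun x =>
    sub_le_sub_left (hM.dotProduct_inv_mulVec_le_fromBlocks (fun _ => c x) (u x)) (κ x)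

/-- The Integrated Variance does not increase when a data point is added to the
training set: if `M = [[a, bᵀ], [b, D]]` is positive definite and the posterior
variances `σ²_A(x) = κ(x) - u(x)ᵀ D⁻¹ u(x)` and
`σ²_{A∪i}(x) = κ(x) - (c(x), u(x))ᵀ M⁻¹ (c(x), u(x))` are integrable, then
`∫ σ²_{A∪i} dμ ≤ ∫ σ²_A dμ`. -/
theorem integrated_variance_antitone
    {X : Type*} [MeasurableSpace X] (μ : Measure X) [IsProbabilityMeasure μ]
    {m : ℕ} (D : Matrix (Fin m) (Fin m) ℝ) (hD : D.IsSymm)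
    (b : Fin m → ℝ) (a : ℝ)
    (hM : (Matrix.fromBlocks
        (Matrix.of (fun (_ : Fin 1) (_ : Fin 1) => a))
        (Matrix.of (fun (_ : Fin 1) (j : Fin m) => b j))
        (Matrix.of (fun (i : Fin m) (_ : Fin 1) => b i)) D).PosDef)
    (κ c : X → ℝ) (u : X → Fin m → ℝ)
    (hκ : Measurable κ) (hc : Measurable c) (hu : Measurable u)
    (hIntA : Integrable (fun x => κ x - u x ⬝ᵥ (D⁻¹ *ᵥ u x)) μ)
    (hIntAi : Integrable (fun x => κ x - (Sum.elim (fun _ : Fin 1 => c x) (u x)) ⬝ᵥ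
        ((Matrix.fromBlocks
            (Matrix.of (fun (_ : Fin 1) (_ : Fin 1) => a))
            (Matrix.of (fun (_ : Fin 1) (j : Fin m) => b j))
            (Matrix.of (fun (i : Fin m) (_ : Fin 1) => b i)) D)⁻¹ *ᵥ
          Sum.elim (fun _ : Fin 1 => c x) (u x))) μ) :
    ∫ x, (κ x - (Sum.elim (fun _ : Fin 1 => c x) (u x)) ⬝ᵥ
        ((Matrix.fromBlocks
            (Matrix.of (fun (_ : Fin 1) (_ : Fin 1) => a))
            (Matrix.of (fun (_ : Fin 1) (j : Fin m) => b j))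
            (Matrix.of (fun (i : Fin m) (_ : Fin 1) => b i)) D)⁻¹ *ᵥ
          Sum.elim (fun _ : Fin 1 => c x) (u x))) ∂μ ≤
      ∫ x, (κ x - u x ⬝ᵥ (D⁻¹ *ᵥ u x)) ∂μ :=
  integrated_variance_antitone_general μ D b a hM κ c u hIntA hIntAi
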